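/- Let Δ = Δ₁ + ⋯ + Δ_r be a Q-nef-partition in ℝ^d with associated polytopes ∇₁,…,∇_r (so Δ₁ + ⋯ + Δ_r and ∇₁ + ⋯ + ∇_r form a dual pair of Q-nef-partitions). Then, for each i = 1,…,r, one has Δ_i = {0} if and only if ∇_i = {0}. -/

import Mathlib

open Pointwise

noncomputable section

/-- The standard inner product on `n → ℝ`. -/
def dot {n : Type*} [Fintype n] (x y : n → ℝ) : ℝ := ∑ i, x i * y i

/-- The lattice points of `n → ℝ`: points with integer coordinates. -/
def latt (n : Type*) [Fintype n] : Set (n → ℝ) := {x | ∀ i, ∃ m : ℤ, x i = (m : ℝ)}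

/-- Polar dual `S* = {y | ⟨x,y⟩ ≥ -1 ∀ x ∈ S}`. -/
def polarDual {n : Type*} [Fintype n] (S : Set (n → ℝ)) : Set (n → ℝ) :=
  {y | ∀ x ∈ S, -1 ≤ dot x y}

/-- `[S]`: the convex hull of the lattice points of `S`. -/
def latticeHull {n : Type*} [Fintype n] (S : Set (n → ℝ)) : Set (n → ℝ) :=
  convexHull ℝ (S ∩ latt n)

/-- A polytope: the convex hull of a finite set. -/
def IsPolytope {n : Type*} [Fintype n] (P : Set (n → ℝ)) : Prop :=
  ∃ F : Set (n → ℝ), F.Finite ∧ P = convexHull ℝ F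

/-- A lattice polytope: the convex hull of a finite set of lattice points. -/
def IsLatticePolytope {n : Type*} [Fintype n] (P : Set (n → ℝ)) : Prop :=
  ∃ F : Set (n → ℝ), F.Finite ∧ F ⊆ latt n ∧ P = convexHull ℝ F

/-- A full-dimensional polytope `P` with `0` in its interior is Q-reflexive if
`[[P]*] = P*`. -/
def IsQReflexive {n : Type*} [Fintype n] (P : Set (n → ℝ)) : Prop :=
  IsPolytope P ∧ 0 ∈ interior P ∧ latticeHull (polarDual (latticeHull P)) = polarDual P

/-- A full-dimensional lattice polytope `P` with `0` in its interior is almost reflexive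
if `[[P*]*] = P`. -/
def IsAlmostReflexive {n : Type*} [Fintype n] (P : Set (n → ℝ)) : Prop :=
  IsLatticePolytope P ∧ 0 ∈ interior P ∧
    latticeHull (polarDual (latticeHull (polarDual P))) = P

/-- A full-dimensional lattice polytope `P` with `0` in its interior is reflexive
if `P*` is a lattice polytope. -/
def IsReflexive {n : Type*} [Fintype n] (P : Set (n → ℝ)) : Prop :=
  IsLatticePolytope P ∧ 0 ∈ interior P ∧ IsLatticePolytope (polarDual P)

/-- A Q-nef-partition: a Minkowski-sum decomposition `Δ = Δ₁ + ⋯ + Δ_r` of a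
Q-reflexive polytope into polytopes with `0 ∈ Δᵢ`, such that
`[Δ] = [Δ₁] + ⋯ + [Δ_r]`. -/
def IsQNefPartition {d r : ℕ} (Δ : Fin r → Set (Fin d → ℝ)) : Prop :=
  IsQReflexive (∑ i, Δ i) ∧ (∀ i, IsPolytope (Δ i)) ∧
    (∀ i, (0 : Fin d → ℝ) ∈ Δ i) ∧
    latticeHull (∑ i, Δ i) = ∑ i, latticeHull (Δ i)

/-- `∇_j := {y : ⟨x, y⟩ ≥ −δ_{ij} for all x ∈ [Δ_i] and all i}`. -/
def nabla {d r : ℕ} (Δ : Fin r → Set (Fin d → ℝ)) (j : Fin r) : Set (Fin d → ℝ) :=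
  {y | ∀ i, ∀ x ∈ latticeHull (Δ i), -(if i = j then (1 : ℝ) else 0) ≤ dot x y}

/-!
If `Δ i = {0}`, every `y ∈ ∇ i` is nonnegative on each `[Δ k]`, hence on `[Δ] = ∑ [Δ k]`.
Since `[Δ]` is spanned by finitely many lattice points, such a `y ≠ 0` could be traded for a
lattice vector `z ≠ 0` with the same property (rational points are dense in rational subspaces).
Every multiple `m • z` is then a lattice point of `[Δ]*`, so it lies in `[[Δ]*] = Δ*`; thus `z`
is nonnegative on `Δ`, a neighbourhood of `0`, and `z = 0`.

Conversely, if `∇ i = {0}` and `p ∈ Δ i`, then `⟨p, w⟩ ≥ 0` for every lattice point `w` of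
`[Δ]*`: either `⟨a, w⟩ ≤ -1` at a lattice point `a` of some other `Δ k`, and `p + a ∈ Δ`,
`w ∈ Δ*` give it; or `w` is nonnegative on all other `[Δ k]`, so a small multiple of `w` lies in
`∇ i` and `w = 0`. Hence `p` is nonnegative on `[[Δ]*] = Δ*`, a neighbourhood of `0`, so `p = 0`.
-/

open Topology Bornology Matrix Filter

section Dot

variable {n : Type*} [Fintype n]

theorem dot_eq_dotProduct (x y : n → ℝ) : dot x y = x ⬝ᵥ y := rfl

theorem dot_comm (x y : n → ℝ) : dot x y = dot y x := dotProduct_comm x y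

@[simp] theorem dot_zero_left (y : n → ℝ) : dot 0 y = 0 := zero_dotProduct y

@[simp] theorem dot_zero_right (x : n → ℝ) : dot x 0 = 0 := dotProduct_zero x

theorem dot_add_left (x x' y : n → ℝ) : dot (x + x') y = dot x y + dot x' y :=
  add_dotProduct x x' y

theorem dot_add_right (x y y' : n → ℝ) : dot x (y + y') = dot x y + dot x y' :=
  dotProduct_add x y y'

theorem dot_sub_right (x y y' : n → ℝ) : dot x (y - y') = dot x y - dot x y' :=
  dotProduct_sub x y y'

theorem dot_neg_left (x y : n → ℝ) : dot (-x) y = -dot x y :=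
  neg_dotProduct x y

theorem dot_smul_left (c : ℝ) (x y : n → ℝ) : dot (c • x) y = c * dot x y :=
  smul_dotProduct c x y

theorem dot_smul_right (c : ℝ) (x y : n → ℝ) : dot x (c • y) = c * dot x y :=
  dotProduct_smul c x y

theorem dot_self_nonneg (x : n → ℝ) : 0 ≤ dot x x :=
  Finset.sum_nonneg fun j _ => mul_self_nonneg (x j)

theorem continuous_dot : Continuous fun p : (n → ℝ) × (n → ℝ) => dot p.1 p.2 :=
  continuous_fst.dotProduct continuous_snd

theorem le_dot_of_mem_convexHull {S : Set (n → ℝ)} {x y : n → ℝ} {c : ℝ}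
    (h : ∀ a ∈ S, c ≤ dot a y) (hx : x ∈ convexHull ℝ S) : c ≤ dot x y :=
  convexHull_min h (convex_halfSpace_ge (f := (dot · y))
    ⟨fun a b => add_dotProduct a b y, fun t a => dot_smul_left t a y⟩ c) hx

theorem dot_nonneg_of_mem_sum {ι : Type*} [Fintype ι] {S : ι → Set (n → ℝ)} {x y : n → ℝ}
    (h : ∀ k, ∀ a ∈ S k, 0 ≤ dot a y) (hx : x ∈ ∑ k, S k) : 0 ≤ dot x y := by
  obtain ⟨g, hg, rfl⟩ := (Set.mem_fintype_sum S x).1 hx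
  rw [dot_eq_dotProduct, sum_dotProduct]
  exact Finset.sum_nonneg fun k _ => h k _ (hg k)

theorem norm_le_sqrt_dot_self (x : n → ℝ) : ‖x‖ ≤ √(dot x x) :=
  (pi_norm_le_iff_of_nonneg (Real.sqrt_nonneg _)).2 fun j => Real.abs_le_sqrt <|
    (sq (x j)).trans_le <| Finset.single_le_sum (f := fun j => x j * x j)
      (fun j _ => mul_self_nonneg (x j)) (Finset.mem_univ j)

end Dot

section Lattice

variable {n : Type*} [Fintype n]

theorem natCast_smul_mem_latt {z : n → ℝ} (hz : z ∈ latt n) (m : ℕ) : (m : ℝ) • z ∈ latt n :=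
  fun j => by
    obtain ⟨k, hk⟩ := hz j
    exact ⟨m * k, by simp [hk]⟩

theorem dot_le_neg_one_of_neg {a w : n → ℝ} (ha : a ∈ latt n) (hw : w ∈ latt n)
    (h : dot a w < 0) : dot a w ≤ -1 := by
  choose A hA using ha
  choose W hW using hw
  have hAW : dot a w = ((∑ j, A j * W j : ℤ) : ℝ) := by simp [dot, hA, hW]
  rw [hAW] at h ⊢
  exact Int.cast_le_neg_one_of_neg (by exact_mod_cast h)

theorem finite_inter_latt {K : Set (n → ℝ)} (hK : IsBounded K) : (K ∩ latt n).Finite := by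
  obtain ⟨C, hC⟩ := hK.exists_norm_le
  refine ((Set.Finite.pi fun _ => Set.finite_Icc (-⌈C⌉) ⌈C⌉).image
    fun (z : n → ℤ) j => (z j : ℝ)).subset ?_
  rintro x ⟨hxK, hx⟩
  choose z hz using hx
  refine ⟨z, fun j _ => ?_, funext fun j => (hz j).symm⟩
  have : |(z j : ℝ)| ≤ ⌈C⌉ :=
    hz j ▸ ((norm_le_pi_norm x j).trans (hC x hxK)).trans (Int.le_ceil C)
  exact abs_le.1 (by exact_mod_cast this)

end Lattice

section Neighbourhoods

theorem exists_pos_smul_mem_of_mem_nhds_zero {E : Type*} [AddCommGroup E] [Module ℝ E]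
    [TopologicalSpace E] [ContinuousSMul ℝ E] {S : Set E} (hS : S ∈ 𝓝 0) (v : E) :
    ∃ t : ℝ, 0 < t ∧ t • v ∈ S := by
  have : Tendsto (fun t : ℝ => t • v) (𝓝[>] 0) (𝓝 0) :=
    ((continuous_id.smul continuous_const).tendsto' 0 0 (zero_smul ℝ v)).mono_left
      nhdsWithin_le_nhds
  exact ((this.eventually hS).and self_mem_nhdsWithin).exists.imp fun t ht => ⟨ht.2, ht.1⟩

variable {n : Type*} [Fintype n]

theorem eq_zero_of_mem_nhds_of_forall_dot_nonneg {S : Set (n → ℝ)} (hS : S ∈ 𝓝 0) {y : n → ℝ}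
    (h : ∀ x ∈ S, 0 ≤ dot x y) : y = 0 := by
  obtain ⟨t, ht, hty⟩ := exists_pos_smul_mem_of_mem_nhds_zero hS (-y)
  have := h _ hty
  rw [dot_smul_left, dot_neg_left] at this
  have hyy : dot y y ≤ 0 := by nlinarith
  exact dotProduct_self_eq_zero.1 (le_antisymm hyy (dot_self_nonneg y))

theorem polarDual_mem_nhds_zero {P : Set (n → ℝ)} (hP : IsBounded P) : polarDual P ∈ 𝓝 0 := by
  have hlt : ∀ x ∈ closure P, ∀ᶠ q : (n → ℝ) × (n → ℝ) in 𝓝 (0, x), -1 < dot q.2 q.1 :=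
    fun x _ => continuousAt_const.eventually_lt
      (continuous_dot.comp continuous_swap).continuousAt (by simp [dot])
  filter_upwards [hP.isCompact_closure.eventually_forall_of_forall_eventually
    (P := fun y x => -1 < dot x y) hlt] with y hy x hx
  exact (hy x (subset_closure hx)).le

end Neighbourhoods

section RationalPoints

variable {n : Type*}

def ratVec (q : n → ℚ) : n → ℝ := fun j => q j

theorem ratVec_add (u v : n → ℚ) : ratVec (u + v) = ratVec u + ratVec v := by
  ext j; simp [ratVec]

theorem ratVec_smul (c : ℚ) (u : n → ℚ) : ratVec (c • u) = (c : ℝ) • ratVec u := by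
  ext j; simp [ratVec]

theorem denseRange_ratVec : DenseRange (ratVec : (n → ℚ) → n → ℝ) :=
  DenseRange.piMap fun _ => Rat.denseRange_cast

variable [Fintype n]

theorem dot_ratVec (u v : n → ℚ) : dot (ratVec u) (ratVec v) = ((u ⬝ᵥ v : ℚ) : ℝ) := by
  simp [dot, ratVec, dotProduct]

theorem exists_ratVec_eq_of_mem_latt {x : n → ℝ} (hx : x ∈ latt n) : ∃ q, ratVec q = x := by
  choose z hz using hx
  exact ⟨fun j => z j, funext fun j => by simp [ratVec, hz]⟩

theorem exists_natCast_smul_ratVec_mem_latt (q : n → ℚ) :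
    ∃ N : ℕ, 0 < N ∧ (N : ℝ) • ratVec q ∈ latt n := by
  refine ⟨∏ j, (q j).den, Finset.prod_pos fun j _ => (q j).pos, fun j => ?_⟩
  obtain ⟨k, hk⟩ := Finset.dvd_prod_of_mem (fun j => (q j).den) (Finset.mem_univ j)
  refine ⟨(q j).num * k, ?_⟩
  have hq : ((q j * (q j).den : ℚ) : ℝ) = (q j).num := by rw [Rat.mul_den_eq_num]; simp
  simp only [Pi.smul_apply, smul_eq_mul, ratVec, hk]
  push_cast at hq ⊢
  linear_combination (k : ℝ) * hq

theorem isCompl_orthogonal_dotProductBilin {K : Type*} [Field K] [LinearOrder K]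
    [IsStrictOrderedRing K] (W : Submodule K (n → K)) :
    IsCompl W (LinearMap.BilinForm.orthogonal (dotProductBilin K K) W) := by
  have hrefl : (dotProductBilin K K : LinearMap.BilinForm K (n → K)).IsRefl :=
    fun x y (h : x ⬝ᵥ y = 0) => by rwa [dotProduct_comm] at h
  refine (LinearMap.BilinForm.isCompl_orthogonal_iff_disjoint hrefl).2 ?_
  exact Submodule.disjoint_def.2 fun x hxW hx => dotProduct_self_eq_zero.1 (hx x hxW)

theorem exists_ratVec_mem_of_mem_nhds {W : Submodule ℚ (n → ℚ)} {y : n → ℝ}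
    (hy : ∀ u ∈ W, dot (ratVec u) y = 0) {U : Set (n → ℝ)} (hU : U ∈ 𝓝 y) :
    ∃ w : n → ℚ, (∀ u ∈ W, u ⬝ᵥ w = 0) ∧ ratVec w ∈ U := by
  obtain ⟨r, hr, hball⟩ := Metric.mem_nhds_iff.1 hU
  have hV : IsOpen {v | dot (v - y) (v - y) < r ^ 2} :=
    isOpen_lt (by unfold dot; fun_prop) continuous_const
  obtain ⟨q, hq⟩ := denseRange_ratVec.exists_mem_open hV ⟨y, by simpa [dot] using pow_pos hr 2⟩
  have hq' : q ∈ W ⊔ LinearMap.BilinForm.orthogonal (dotProductBilin ℚ ℚ) W :=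
    (isCompl_orthogonal_dotProductBilin W).sup_eq_top ▸ Submodule.mem_top
  obtain ⟨u, hu, w, hw, rfl⟩ := Submodule.mem_sup.1 hq'
  have hwW : ∀ v ∈ W, v ⬝ᵥ w = 0 := fun v hv => hw v hv
  refine ⟨w, hwW, hball ?_⟩
  -- `u ⊥ w - y`, so by Pythagoras the projection `w` of `q = u + w` onto `Wᗮ` is at least as
  -- close to `y` as `q` is.
  have hperp : dot (ratVec u) (ratVec w - y) = 0 := by
    rw [dot_sub_right, dot_ratVec, hwW u hu, hy u hu, Rat.cast_zero, sub_zero]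
  have hsplit : dot (ratVec (u + w) - y) (ratVec (u + w) - y) =
      dot (ratVec u) (ratVec u) + 2 * dot (ratVec u) (ratVec w - y) +
        dot (ratVec w - y) (ratVec w - y) := by
    simp only [ratVec_add, add_sub_assoc, dot_add_left, dot_add_right,
      dot_comm (ratVec w - y) (ratVec u)]
    ring
  have hlt : dot (ratVec w - y) (ratVec w - y) < r ^ 2 := by
    have hq : dot (ratVec (u + w) - y) (ratVec (u + w) - y) < r ^ 2 := hq
    nlinarith [dot_self_nonneg (ratVec u)]
  rw [Metric.mem_ball, dist_eq_norm]
  calc ‖ratVec w - y‖ ≤ √(dot (ratVec w - y) (ratVec w - y)) := norm_le_sqrt_dot_self _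
    _ < r := (Real.sqrt_lt' hr).2 hlt

theorem exists_ne_zero_mem_latt_forall_dot_nonneg {A : Set (n → ℝ)} (hA : A.Finite)
    (hAl : A ⊆ latt n) {y : n → ℝ} (hy0 : y ≠ 0) (hy : ∀ a ∈ A, 0 ≤ dot a y) :
    ∃ z ∈ latt n, z ≠ 0 ∧ ∀ a ∈ A, 0 ≤ dot a z := by
  set W := Submodule.span ℚ {t : n → ℚ | ratVec t ∈ A ∧ dot (ratVec t) y = 0}
  have hWy : ∀ u ∈ W, dot (ratVec u) y = 0 := fun u hu => by
    induction hu using Submodule.span_induction with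
    | mem t ht => exact ht.2
    | zero => simp [dot, ratVec]
    | add u v _ _ hu hv => rw [ratVec_add, dot_add_left, hu, hv, add_zero]
    | smul c u _ hu => rw [ratVec_smul, dot_smul_left, hu, mul_zero]
  -- Move `y` to a nearby rational vector orthogonal to the constraints that are tight at `y`;
  -- the strict ones stay strict.
  have hU : ∀ᶠ v in 𝓝 y, v ≠ 0 ∧ ∀ a ∈ A, dot a y ≠ 0 → 0 < dot a v := by
    refine (eventually_ne_nhds hy0).and ((eventually_all_finite hA).2 fun a ha => ?_)
    by_cases hay : dot a y = 0
    · exact Eventually.of_forall fun _ h => absurd hay h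
    · exact (continuousAt_const.eventually_lt (continuous_dot.comp
        (continuous_const.prodMk continuous_id)).continuousAt
        ((hy a ha).lt_of_ne' hay)).mono fun _ h _ => h
  obtain ⟨w, hwW, hw0, hwA⟩ := exists_ratVec_mem_of_mem_nhds hWy hU
  have hwA' : ∀ a ∈ A, 0 ≤ dot a (ratVec w) := fun a ha => by
    by_cases hay : dot a y = 0
    · obtain ⟨t, rfl⟩ := exists_ratVec_eq_of_mem_latt (hAl ha)
      rw [dot_ratVec, hwW t (Submodule.subset_span ⟨ha, hay⟩), Rat.cast_zero]
    · exact (hwA a ha hay).le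
  obtain ⟨N, hN, hNl⟩ := exists_natCast_smul_ratVec_mem_latt w
  refine ⟨(N : ℝ) • ratVec w, hNl, smul_ne_zero (by positivity) hw0, fun a ha => ?_⟩
  rw [dot_smul_right]
  exact mul_nonneg (Nat.cast_nonneg N) (hwA' a ha)

end RationalPoints

section Polytopes

variable {n : Type*} [Fintype n]

theorem IsPolytope.isBounded {P : Set (n → ℝ)} (hP : IsPolytope P) : IsBounded P := by
  obtain ⟨F, hF, rfl⟩ := hP
  exact isBounded_convexHull.2 hF.isBounded

theorem IsPolytope.convex {P : Set (n → ℝ)} (hP : IsPolytope P) : Convex ℝ P := by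
  obtain ⟨F, -, rfl⟩ := hP
  exact convex_convexHull ℝ F

theorem latticeHull_subset {S : Set (n → ℝ)} (hS : Convex ℝ S) : latticeHull S ⊆ S :=
  convexHull_min Set.inter_subset_left hS

theorem latticeHull_zero : latticeHull ({0} : Set (n → ℝ)) = {0} := by
  rw [latticeHull, Set.inter_eq_left.2 (Set.singleton_subset_iff.2 fun _ => ⟨0, by simp⟩),
    convexHull_singleton]

theorem IsQReflexive.mem_polarDual {P : Set (n → ℝ)} (hP : IsQReflexive P) {w : n → ℝ}
    (hw : w ∈ polarDual (latticeHull P)) (hwl : w ∈ latt n) : w ∈ polarDual P :=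
  hP.2.2 ▸ subset_convexHull ℝ _ ⟨hw, hwl⟩

theorem IsQReflexive.eq_zero_of_forall_dot_nonneg {P : Set (n → ℝ)} (hP : IsQReflexive P)
    {y : n → ℝ} (hy : ∀ x ∈ latticeHull P, 0 ≤ dot x y) : y = 0 := by
  by_contra hy0
  obtain ⟨z, hzl, hz0, hz⟩ := exists_ne_zero_mem_latt_forall_dot_nonneg
    (finite_inter_latt hP.1.isBounded) Set.inter_subset_right hy0
    fun a ha => hy a (subset_convexHull ℝ _ ha)
  refine hz0 (eq_zero_of_mem_nhds_of_forall_dot_nonneg (mem_interior_iff_mem_nhds.1 hP.2.1)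
    fun x hx => ?_)
  have hm : ∀ m : ℕ, -1 ≤ m * dot x z := fun m => by
    have hmz : (m : ℝ) • z ∈ polarDual (latticeHull P) := fun x' hx' => by
      rw [dot_smul_right]
      exact neg_one_lt_zero.le.trans
        (mul_nonneg (Nat.cast_nonneg m) (le_dot_of_mem_convexHull hz hx'))
    simpa only [dot_smul_right] using
      hP.mem_polarDual hmz (natCast_smul_mem_latt hzl m) x hx
  by_contra! hneg
  obtain ⟨m, hm'⟩ := exists_nat_gt (-1 / dot x z)
  linarith [hm m, (div_lt_iff_of_neg hneg).1 hm']

end Polytopes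

section NefPartitions

variable {d r : ℕ} {Δ : Fin r → Set (Fin d → ℝ)}

theorem mem_nabla_iff {j : Fin r} {y : Fin d → ℝ} :
    y ∈ nabla Δ j ↔ y ∈ polarDual (latticeHull (Δ j)) ∧
      ∀ i ≠ j, ∀ x ∈ latticeHull (Δ i), 0 ≤ dot x y := by
  simp only [nabla, polarDual, Set.mem_ofPred_eq]
  refine ⟨fun h => ⟨fun x hx => by simpa using h j x hx, fun i hi x hx => by
    simpa [hi] using h i x hx⟩, fun ⟨hj, hi⟩ i x hx => ?_⟩
  by_cases hij : i = j
  · subst hij; simpa using hj x hx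
  · simpa [hij] using hi i hij x hx

theorem add_mem_sum_of_ne {ι E : Type*} [Fintype ι] [AddCommMonoid E] {S : ι → Set E}
    (h0 : ∀ k, 0 ∈ S k) {i j : ι} (hij : i ≠ j) {p a : E} (hp : p ∈ S i) (ha : a ∈ S j) :
    p + a ∈ ∑ k, S k := by
  classical
  have := Set.finsetSum_mem_finsetSum Finset.univ S (Pi.single i p + Pi.single j a) fun k _ => by
    by_cases hki : k = i
    · subst hki; simpa [hij] using hp
    · by_cases hkj : k = j
      · subst hkj; simpa [hki] using ha
      · simpa [hki, hkj] using h0 k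
  simpa [Finset.sum_add_distrib] using this

theorem IsQNefPartition.nabla_eq_zero_of_eq_zero (hQ : IsQNefPartition Δ) {i : Fin r}
    (hi : Δ i = {0}) : nabla Δ i = {0} := by
  obtain ⟨hrefl, -, -, hhull⟩ := hQ
  refine Set.eq_singleton_iff_unique_mem.2
    ⟨mem_nabla_iff.2 ⟨fun x _ => by simp, fun _ _ x _ => by simp⟩, fun y hy => ?_⟩
  have hk : ∀ k, ∀ x ∈ latticeHull (Δ k), 0 ≤ dot x y := fun k x hx => by
    by_cases hki : k = i
    · subst hki
      rw [hi, latticeHull_zero, Set.mem_singleton_iff] at hx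
      simp [hx]
    · exact (mem_nabla_iff.1 hy).2 k hki x hx
  exact hrefl.eq_zero_of_forall_dot_nonneg fun x hx => dot_nonneg_of_mem_sum hk (hhull ▸ hx)

theorem IsQNefPartition.dot_nonneg_of_nabla_eq_zero (hQ : IsQNefPartition Δ) {i : Fin r}
    (hi : nabla Δ i = {0}) {p : Fin d → ℝ} (hp : p ∈ Δ i) {w : Fin d → ℝ}
    (hw : w ∈ polarDual (latticeHull (∑ k, Δ k))) (hwl : w ∈ latt (Fin d)) : 0 ≤ dot p w := by
  obtain ⟨hrefl, hpoly, hzero, -⟩ := hQ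
  by_cases h : ∃ k ≠ i, ∃ a ∈ Δ k ∩ latt (Fin d), dot a w < 0
  · obtain ⟨k, hki, a, ⟨ha, hal⟩, haw⟩ := h
    have := hrefl.mem_polarDual hw hwl _ (add_mem_sum_of_ne hzero (Ne.symm hki) hp ha)
    rw [dot_add_left] at this
    linarith [dot_le_neg_one_of_neg hal hwl haw]
  · push Not at h
    obtain ⟨t, ht, htw⟩ := exists_pos_smul_mem_of_mem_nhds_zero (polarDual_mem_nhds_zero
      ((hpoly i).isBounded.subset (latticeHull_subset (hpoly i).convex))) w
    have htw' : t • w ∈ nabla Δ i := mem_nabla_iff.2 ⟨htw, fun k hk x hx => by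
      rw [dot_smul_right]
      exact mul_nonneg ht.le (le_dot_of_mem_convexHull (h k hk) hx)⟩
    rw [hi, Set.mem_singleton_iff, smul_eq_zero] at htw'
    rw [htw'.resolve_left ht.ne', dot_zero_right]

theorem IsQNefPartition.eq_zero_of_nabla_eq_zero (hQ : IsQNefPartition Δ) {i : Fin r}
    (hi : nabla Δ i = {0}) : Δ i = {0} := by
  have key : ∀ p ∈ Δ i, ∀ w ∈ polarDual (latticeHull (∑ k, Δ k)) ∩ latt (Fin d), 0 ≤ dot p w :=
    fun p hp w hw => hQ.dot_nonneg_of_nabla_eq_zero hi hp hw.1 hw.2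
  obtain ⟨⟨hpoly, -, hdual⟩, -, hzero, -⟩ := hQ
  refine Set.eq_singleton_iff_unique_mem.2 ⟨hzero i, fun p hp => ?_⟩
  refine eq_zero_of_mem_nhds_of_forall_dot_nonneg (polarDual_mem_nhds_zero hpoly.isBounded)
    fun v hv => ?_
  rw [← hdual] at hv
  exact le_dot_of_mem_convexHull (fun w hw => dot_comm p w ▸ key p hp w hw) hv

end NefPartitions

theorem qnefpartition_zero_iff_general {d r : ℕ}
    (Δ : Fin r → Set (Fin d → ℝ)) (hQ : IsQNefPartition Δ) :
    ∀ i, Δ i = {0} ↔ nabla Δ i = {0} :=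
  fun _ => ⟨hQ.nabla_eq_zero_of_eq_zero, hQ.eq_zero_of_nabla_eq_zero⟩

/-- For a dual pair of Q-nef-partitions `Δ = Δ₁ + ⋯ + Δ_r` and
`∇ = ∇₁ + ⋯ + ∇_r`, one has `Δ_i = {0}` iff `∇_i = {0}`, for each `i`. -/
theorem qnefpartition_zero_iff {d r : ℕ} (hd : 0 < d)
    (Δ : Fin r → Set (Fin d → ℝ)) (hQ : IsQNefPartition Δ) :
    ∀ i, Δ i = {0} ↔ nabla Δ i = {0} :=
  qnefpartition_zero_iff_general Δ hQ
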